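/- Let ψ be the morphism with ψ(S) = LSL, ψ(L) = LSLSL, and define languages by 𝓛₀ = L S* and 𝓛_{i+1} = ψ(𝓛_i) L S*. Then no word in any 𝓛_i contains L³ = LLL as a factor, contains SSL as a factor, or contains SLSLS as a factor. -/

import Mathlib

/-! Each forbidden factor has length at most 5, so a forbidden factor of `x ++ y` is a factor of
`y` or of `x` followed by the first four letters of `y`. Building `ψ(v) L Sᵏ` from the right, one
block `ψ(a)` at a time, it therefore suffices to track the length-4 prefix, which takes only six
values; each step is then a finite check. -/

/-- Letters: `false` = S, `true` = L. -/
def psi : Bool → List Bool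
  | false => [true, false, true]
  | true => [true, false, true, false, true]

/-- `LangL i` is the language 𝓛ᵢ : 𝓛₀ = L S*, 𝓛_{i+1} = ψ(𝓛_i) L S*. -/
def LangL : ℕ → Set (List Bool)
  | 0 => {w | ∃ k, w = true :: List.replicate k false}
  | i + 1 => {w | ∃ v ∈ LangL i, ∃ k, w = v.flatMap psi ++ true :: List.replicate k false}

theorem List.IsInfix.infix_append_take_or_infix_right {α : Type*} {p x y : List α}
    (h : p <:+: x ++ y) : p <:+: x ++ y.take (p.length - 1) ∨ p <:+: y := by
  obtain ⟨s, r, h⟩ := h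
  rw [List.append_assoc, List.append_eq_append_iff] at h
  rcases h with ⟨a, rfl, h⟩ | ⟨c, rfl, rfl⟩
  · rcases List.append_eq_append_iff.mp h with ⟨b, rfl, rfl⟩ | ⟨c, rfl, rfl⟩
    · exact .inl ⟨s, b ++ y.take (p.length - 1), by simp⟩
    · rcases a.eq_nil_or_concat with rfl | ⟨l, a, rfl⟩
      · exact .inr ⟨[], r, by simp⟩
      · refine .inl ⟨s, r.take l.length, ?_⟩
        simp [List.take_append, Nat.add_comm]
  · exact .inr ⟨c, r, by simp⟩

theorem List.take_append_take_self {α : Type*} (x y : List α) (n : ℕ) :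
    (x ++ y.take n).take n = (x ++ y).take n := by
  simp [List.take_append, List.take_take]

abbrev FactorFree {α : Type*} (F : List (List α)) (w : List α) : Prop :=
  ∀ p ∈ F, ¬ p <:+: w

theorem FactorFree.append {α : Type*} {F : List (List α)} {n : ℕ}
    (hF : ∀ p ∈ F, p.length ≤ n + 1) {x y : List α} (hxy : FactorFree F (x ++ y.take n))
    (hy : FactorFree F y) : FactorFree F (x ++ y) := by
  intro p hp h
  rcases h.infix_append_take_or_infix_right with h | h
  · have htake : y.take (p.length - 1) <+: y.take n :=
      List.take_prefix_take_left (by have := hF p hp; omega)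
    exact hxy p hp (h.trans ((List.prefix_append_right_inj x).mpr htake).isInfix)
  · exact hy p hp h

abbrev forbiddenFactors : List (List Bool) :=
  [[true, true, true], [false, false, true], [false, true, false, true, false]]

/-- The possible length-4 prefixes of `ψ(v) L Sᵏ`. -/
abbrev admissiblePrefixes : List (List Bool) :=
  [[true], [true, false], [true, false, false], [true, false, false, false],
    [true, false, true, true], [true, false, true, false]]

abbrev Admissible (u : List Bool) : Prop :=
  FactorFree forbiddenFactors u ∧ u.take 4 ∈ admissiblePrefixes

theorem factorFree_replicate_false (k : ℕ) :
    FactorFree forbiddenFactors (List.replicate k false) := by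
  have htrue : ∀ p ∈ forbiddenFactors, true ∈ p := by decide
  intro p hp h
  simpa using List.eq_of_mem_replicate (h.subset (htrue p hp))

theorem admissible_true_cons_replicate_false (k : ℕ) :
    Admissible (true :: List.replicate k false) := by
  have hshort : ∀ j ≤ 4, Admissible (true :: List.replicate j false) := by decide
  obtain ⟨hfree, hmem⟩ := hshort (min 4 k) (min_le_left ..)
  rw [← List.take_replicate] at hfree hmem
  exact ⟨FactorFree.append (x := [true]) (n := 4) (by decide) hfree (factorFree_replicate_false k),
    (List.take_append_take_self [true] _ 4).subst (motive := (· ∈ admissiblePrefixes)) hmem⟩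

theorem Admissible.psi_append {u : List Bool} (hu : Admissible u) (a : Bool) :
    Admissible (psi a ++ u) := by
  have hblock : ∀ t ∈ admissiblePrefixes, Admissible (psi a ++ t) := by cases a <;> decide
  obtain ⟨hfree, hmem⟩ := hblock _ hu.2
  exact ⟨FactorFree.append (n := 4) (by decide) hfree hu.1, by rwa [← List.take_append_take_self]⟩

theorem admissible_flatMap_psi_append (v : List Bool) (k : ℕ) :
    Admissible (v.flatMap psi ++ true :: List.replicate k false) := by
  induction v with
  | nil => exact admissible_true_cons_replicate_false k
  | cons a v ih =>
    rw [List.flatMap_cons, List.append_assoc]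
    exact ih.psi_append a

theorem exists_eq_flatMap_psi_append_of_mem_langL {i : ℕ} {w : List Bool} (hw : w ∈ LangL i) :
    ∃ (v : List Bool) (k : ℕ), w = v.flatMap psi ++ true :: List.replicate k false := by
  cases i with
  | zero => obtain ⟨k, rfl⟩ := hw; exact ⟨[], k, rfl⟩
  | succ i => obtain ⟨v, -, k, rfl⟩ := hw; exact ⟨v, k, rfl⟩

theorem stmt_16 (i : ℕ) (w : List Bool) (hw : w ∈ LangL i) :
    ¬ ([true, true, true] <:+: w) ∧
    ¬ ([false, false, true] <:+: w) ∧
    ¬ ([false, true, false, true, false] <:+: w) := by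
  obtain ⟨v, k, rfl⟩ := exists_eq_flatMap_psi_append_of_mem_langL hw
  have hfree := (admissible_flatMap_psi_append v k).1
  exact ⟨hfree _ (by simp), hfree _ (by simp), hfree _ (by simp)⟩
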